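/- For every n ≥ 0: E[(f_n(3, σ¹(n)) − (1−θ)/2)(f_n(4, σ¹(n)) − (1−θ)/2)] = ((1−θ)/2)·y_{n;1−θ} + (1/2)(u_{n;θ} − (θ/2)x_{n;θ}) + (3/2)(v_{n;θ} − (θ/2)x_{n;θ}) − (w_{n;1−θ} − ((1−θ)/2)x_{n;1−θ}). -/
import Mathlib


open Finset Filter

namespace Broadcast

/-- The root distribution `π = (θ/2, θ/2, (1-θ)/2, (1-θ)/2)`. -/
noncomputable def rootDist (θ : ℝ) (i : Fin 4) : ℝ :=
  if (i : ℕ) < 2 then θ / 2 else (1 - θ) / 2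

/-- The transition matrix `P i j = λ · 1{i=j} + (1-λ) π_j`. -/
noncomputable def trans (θ lam : ℝ) (i j : Fin 4) : ℝ :=
  (if i = j then lam else 0) + (1 - lam) * rootDist θ j

/-- Vertices at level `n` of the infinite rooted `d`-ary tree, encoded as paths. -/
abbrev Vtx (d n : ℕ) := Fin n → Fin d

/-- Configurations (assignments of states) on level `n`. -/
abbrev Config (d n : ℕ) := Vtx d n → Fin 4

/-- Restriction of a level-`(n+1)` configuration to the subtree of the `j`-th child
of the root. -/
def restrict {d n : ℕ} (j : Fin d) (A : Config d (n + 1)) : Config d n :=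
  fun p => A (Fin.cons j p)

/-- `lik θ λ d n i A` is the probability of observing the configuration `A` on level `n`,
given that the root is in state `i` (the broadcasting process). -/
noncomputable def lik (θ lam : ℝ) (d : ℕ) : (n : ℕ) → Fin 4 → Config d n → ℝ
  | 0, i, A => if A Fin.elim0 = i then 1 else 0
  | n + 1, i, A =>
      ∏ j : Fin d, ∑ k : Fin 4, trans θ lam i k * lik θ lam d n k (restrict j A)

/-- Unconditional probability of observing the configuration `A` on level `n`. -/
noncomputable def marg (θ lam : ℝ) (d n : ℕ) (A : Config d n) : ℝ :=
  ∑ i : Fin 4, rootDist θ i * lik θ lam d n i A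

/-- The posterior `f_n(i, A) = P(σ_ρ = i ∣ σ(n) = A)`. -/
noncomputable def post (θ lam : ℝ) (d n : ℕ) (i : Fin 4) (A : Config d n) : ℝ :=
  rootDist θ i * lik θ lam d n i A / marg θ lam d n A

/-- Expectation of `g(σ(n))` conditioned on the root being in state `r`,
i.e. `E g(σ^r(n))`. -/
noncomputable def condE (θ lam : ℝ) (d n : ℕ) (r : Fin 4) (g : Config d n → ℝ) : ℝ :=
  ∑ A : Config d n, lik θ lam d n r A * g A

/-- Unconditional expectation of `g(σ(n))`. -/
noncomputable def uncondE (θ lam : ℝ) (d n : ℕ) (g : Config d n → ℝ) : ℝ :=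
  ∑ A : Config d n, marg θ lam d n A * g A

/-- `x_{n;θ} = E f_n(1, σ¹(n)) - θ/2`. -/
noncomputable def xT (θ lam : ℝ) (d n : ℕ) : ℝ :=
  condE θ lam d n 0 (fun A => post θ lam d n 0 A) - θ / 2

/-- `y_{n;θ} = E f_n(2, σ¹(n)) - θ/2`. -/
noncomputable def yT (θ lam : ℝ) (d n : ℕ) : ℝ :=
  condE θ lam d n 0 (fun A => post θ lam d n 1 A) - θ / 2

/-- `z_{n;θ} = E f_n(1, σ³(n)) - θ/2`. -/
noncomputable def zT (θ lam : ℝ) (d n : ℕ) : ℝ :=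
  condE θ lam d n 2 (fun A => post θ lam d n 0 A) - θ / 2

/-- `x_{n;1-θ} = E f_n(3, σ³(n)) - (1-θ)/2`. -/
noncomputable def xH (θ lam : ℝ) (d n : ℕ) : ℝ :=
  condE θ lam d n 2 (fun A => post θ lam d n 2 A) - (1 - θ) / 2

/-- `y_{n;1-θ} = E f_n(4, σ³(n)) - (1-θ)/2`. -/
noncomputable def yH (θ lam : ℝ) (d n : ℕ) : ℝ :=
  condE θ lam d n 2 (fun A => post θ lam d n 3 A) - (1 - θ) / 2

/-- `z_{n;1-θ} = E f_n(3, σ¹(n)) - (1-θ)/2`. -/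
noncomputable def zH (θ lam : ℝ) (d n : ℕ) : ℝ :=
  condE θ lam d n 0 (fun A => post θ lam d n 2 A) - (1 - θ) / 2

/-- `u_{n;θ} = E (f_n(1, σ¹(n)) - θ/2)²`. -/
noncomputable def uT (θ lam : ℝ) (d n : ℕ) : ℝ :=
  condE θ lam d n 0 (fun A => (post θ lam d n 0 A - θ / 2) ^ 2)

/-- `v_{n;θ} = E (f_n(2, σ¹(n)) - θ/2)²`. -/
noncomputable def vT (θ lam : ℝ) (d n : ℕ) : ℝ :=
  condE θ lam d n 0 (fun A => (post θ lam d n 1 A - θ / 2) ^ 2)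

/-- `w_{n;θ} = E (f_n(1, σ³(n)) - θ/2)²`. -/
noncomputable def wT (θ lam : ℝ) (d n : ℕ) : ℝ :=
  condE θ lam d n 2 (fun A => (post θ lam d n 0 A - θ / 2) ^ 2)

/-- `w_{n;1-θ} = E (f_n(3, σ¹(n)) - (1-θ)/2)²`. -/
noncomputable def wH (θ lam : ℝ) (d n : ℕ) : ℝ :=
  condE θ lam d n 0 (fun A => (post θ lam d n 2 A - (1 - θ) / 2) ^ 2)

/-- `Y_{ij}(n) = f_n(i, σ_j(n+1))`, viewed as a function of the level-`(n+1)`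
configuration. -/
noncomputable def Yf (θ lam : ℝ) (d n : ℕ) (i : Fin 4) (j : Fin d)
    (A : Config d (n + 1)) : ℝ :=
  post θ lam d n i (restrict j A)

/-- `Z_i(n)`, viewed as a function of the level-`(n+1)` configuration. -/
noncomputable def Zf (θ lam : ℝ) (d n : ℕ) (i : Fin 4) (A : Config d (n + 1)) : ℝ :=
  if (i : ℕ) < 2 then
    ∏ j : Fin d, (1 + (2 * lam / θ) * (Yf θ lam d n i j A - θ / 2))
  else
    ∏ j : Fin d, (1 + (2 * lam / (1 - θ)) * (Yf θ lam d n i j A - (1 - θ) / 2))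

/-- `S = (θ/2)Z₁ + (θ/2)Z₂ + ((1-θ)/2)Z₃ + ((1-θ)/2)Z₄`. -/
noncomputable def Sf (θ lam : ℝ) (d n : ℕ) (A : Config d (n + 1)) : ℝ :=
  θ / 2 * Zf θ lam d n 0 A + θ / 2 * Zf θ lam d n 1 A
    + (1 - θ) / 2 * Zf θ lam d n 2 A + (1 - θ) / 2 * Zf θ lam d n 3 A

/-- Total variation distance between the laws of `σ^i(n)` and `σ^j(n)`. -/
noncomputable def dTV (θ lam : ℝ) (d n : ℕ) (i j : Fin 4) : ℝ :=
  (∑ A : Config d n, |lik θ lam d n i A - lik θ lam d n j A|) / 2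

/-- The model is reconstructible if for some pair of root states the total variation
distance between the conditioned level-`n` configurations does not vanish. -/
def Reconstructible (θ lam : ℝ) (d : ℕ) : Prop :=
  ∃ i j : Fin 4, 0 < Filter.limsup (fun n => dTV θ lam d n i j) Filter.atTop

/-- Probability that the root is in state `i` and the states at the vertices
`v 1, …, v k ∈ L(M)` are `c 1, …, c k`. -/
noncomputable def jointRootEvent (θ lam : ℝ) (d M k : ℕ) (v : Fin k → Vtx d M)
    (c : Fin k → Fin 4) (i : Fin 4) : ℝ :=
  ∑ A : Config d M,
    if ∀ t, A (v t) = c t then rootDist θ i * lik θ lam d M i A else 0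

/-- Conditional probability `P(σ_ρ = i ∣ σ_{v t} = c t, 1 ≤ t ≤ k)`. -/
noncomputable def condRoot (θ lam : ℝ) (d M k : ℕ) (v : Fin k → Vtx d M)
    (c : Fin k → Fin 4) (i : Fin 4) : ℝ :=
  jointRootEvent θ lam d M k v c i / ∑ i' : Fin 4, jointRootEvent θ lam d M k v c i'


-- auxiliary lemmas
variable {θ lam : ℝ} {d : ℕ}
variable {θ lam : ℝ} {d : ℕ}

lemma rootDist0 : rootDist θ 0 = θ / 2 := rfl
lemma rootDist1 : rootDist θ 1 = θ / 2 := rfl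
lemma rootDist2 : rootDist θ 2 = (1 - θ) / 2 := rfl
lemma rootDist3 : rootDist θ 3 = (1 - θ) / 2 := rfl

lemma rootDist_pos (hθ : θ ∈ Set.Ioo (0 : ℝ) 1) (i : Fin 4) : 0 < rootDist θ i := by
  unfold rootDist
  split
  · linarith [hθ.1]
  · linarith [hθ.2]

lemma sum_trans (i : Fin 4) : ∑ j : Fin 4, trans θ lam i j = 1 := by
  unfold trans
  rw [Fin.sum_univ_four, rootDist0, rootDist1, rootDist2, rootDist3]
  fin_cases i <;> simp <;> ring

def configEquiv (d n : ℕ) : Config d (n + 1) ≃ (Fin d → Config d n) where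
  toFun A := fun j => restrict j A
  invFun B := fun q => B (q 0) (fun i => q i.succ)
  left_inv A := by
    funext q
    exact congrArg A (Fin.cons_self_tail q)
  right_inv B := by
    funext j p
    simp [restrict]

lemma sum_config_prod {n : ℕ} (g : Fin d → Config d n → ℝ) :
    ∑ A : Config d (n + 1), ∏ j : Fin d, g j (restrict j A)
      = ∏ j : Fin d, ∑ B : Config d n, g j B := by
  rw [Fintype.prod_sum]
  exact Fintype.sum_equiv (configEquiv d n) _ _ (fun A => rfl)

lemma sum_lik_one : ∀ (n : ℕ) (i : Fin 4), ∑ A : Config d n, lik θ lam d n i A = 1 := by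
  intro n
  induction n with
  | zero =>
      intro i
      rw [Fintype.sum_equiv (Equiv.funUnique (Vtx d 0) (Fin 4)) _
        (fun c : Fin 4 => if c = i then (1 : ℝ) else 0)]
      · simp
      · intro A
        simp only [lik, Equiv.funUnique_apply]
        congr 1
  | succ n ih =>
      intro i
      show ∑ A : Config d (n+1), ∏ j : Fin d,
        ∑ k : Fin 4, trans θ lam i k * lik θ lam d n k (restrict j A) = 1
      rw [sum_config_prod (fun j B => ∑ k : Fin 4, trans θ lam i k * lik θ lam d n k B)]
      have : ∀ j : Fin d, ∑ B : Config d n,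
          ∑ k : Fin 4, trans θ lam i k * lik θ lam d n k B = 1 := by
        intro j
        rw [Finset.sum_comm]
        calc ∑ k : Fin 4, ∑ B : Config d n, trans θ lam i k * lik θ lam d n k B
            = ∑ k : Fin 4, trans θ lam i k * ∑ B : Config d n, lik θ lam d n k B := by
              simp [Finset.mul_sum]
          _ = 1 := by simp [ih, sum_trans]
      exact Finset.prod_eq_one fun j _ => this j

lemma lik_nonneg (hP : ∀ i j : Fin 4, 0 ≤ trans θ lam i j) :
    ∀ (n : ℕ) (i : Fin 4) (A : Config d n), 0 ≤ lik θ lam d n i A := by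
  intro n
  induction n with
  | zero => intro i A; simp only [lik]; split <;> norm_num
  | succ n ih =>
      intro i A
      apply Finset.prod_nonneg
      intro j _
      exact Finset.sum_nonneg fun k _ => mul_nonneg (hP i k) (ih k _)

lemma lik_eq_zero_of_marg (hθ : θ ∈ Set.Ioo (0 : ℝ) 1)
    (hP : ∀ i j : Fin 4, 0 ≤ trans θ lam i j) {n : ℕ} {A : Config d n}
    (h : marg θ lam d n A = 0) (i : Fin 4) : lik θ lam d n i A = 0 := by
  unfold marg at h
  have h2 := (Finset.sum_eq_zero_iff_of_nonneg
    (fun j _ => mul_nonneg (rootDist_pos hθ j).le (lik_nonneg hP n j A))).mp h i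
    (Finset.mem_univ i)
  exact (mul_eq_zero.mp h2).resolve_left (rootDist_pos hθ i).ne'

lemma post_sum (hθ : θ ∈ Set.Ioo (0 : ℝ) 1)
    (hP : ∀ i j : Fin 4, 0 ≤ trans θ lam i j) {n : ℕ} (i : Fin 4) (A : Config d n) :
    lik θ lam d n i A * (∑ j : Fin 4, post θ lam d n j A) = lik θ lam d n i A := by
  by_cases h : marg θ lam d n A = 0
  · rw [lik_eq_zero_of_marg hθ hP h i, zero_mul]
  · have h1 : ∑ j : Fin 4, post θ lam d n j A = 1 := by
      unfold post
      rw [← Finset.sum_div]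
      unfold marg at h ⊢
      exact div_self h
    rw [h1, mul_one]

lemma bayes {n : ℕ} (i j : Fin 4) (A : Config d n) :
    rootDist θ i * (lik θ lam d n i A * post θ lam d n j A)
      = rootDist θ j * (lik θ lam d n j A * post θ lam d n i A) := by
  unfold post
  ring

-- permutation machinery

lemma trans_perm (e : Equiv.Perm (Fin 4)) (he : ∀ i, rootDist θ (e i) = rootDist θ i)
    (i j : Fin 4) : trans θ lam (e i) (e j) = trans θ lam i j := by
  unfold trans
  rw [he]
  congr 1
  simp [EmbeddingLike.apply_eq_iff_eq]

lemma lik_perm (e : Equiv.Perm (Fin 4)) (he : ∀ i, rootDist θ (e i) = rootDist θ i) :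
    ∀ (n : ℕ) (i : Fin 4) (A : Config d n),
      lik θ lam d n (e i) (fun v => e (A v)) = lik θ lam d n i A := by
  intro n
  induction n with
  | zero =>
      intro i A
      simp only [lik]
      congr 1
      simp [EmbeddingLike.apply_eq_iff_eq]
  | succ n ih =>
      intro i A
      simp only [lik]
      refine Finset.prod_congr rfl fun j _ => ?_
      rw [← Equiv.sum_comp e (fun k => trans θ lam (e i) k
        * lik θ lam d n k (restrict j (fun v => e (A v))))]
      refine Finset.sum_congr rfl fun k _ => ?_
      rw [trans_perm e he]
      congr 1
      exact ih k (restrict j A)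

lemma marg_perm (e : Equiv.Perm (Fin 4)) (he : ∀ i, rootDist θ (e i) = rootDist θ i)
    {n : ℕ} (A : Config d n) :
    marg θ lam d n (fun v => e (A v)) = marg θ lam d n A := by
  unfold marg
  rw [← Equiv.sum_comp e (fun i => rootDist θ i * lik θ lam d n i (fun v => e (A v)))]
  refine Finset.sum_congr rfl fun i _ => ?_
  rw [he, lik_perm e he]

lemma post_perm (e : Equiv.Perm (Fin 4)) (he : ∀ i, rootDist θ (e i) = rootDist θ i)
    {n : ℕ} (i : Fin 4) (A : Config d n) :
    post θ lam d n (e i) (fun v => e (A v)) = post θ lam d n i A := by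
  unfold post
  rw [he, lik_perm e he, marg_perm e he]

lemma sum_comp_perm (e : Equiv.Perm (Fin 4)) {n : ℕ} (H : Config d n → ℝ) :
    ∑ A : Config d n, H (fun v => e (A v)) = ∑ A : Config d n, H A :=
  Fintype.sum_equiv (Equiv.arrowCongr (Equiv.refl (Vtx d n)) e) _ _ (fun A => rfl)

lemma perm_sum (e : Equiv.Perm (Fin 4)) (he : ∀ i, rootDist θ (e i) = rootDist θ i)
    {n : ℕ} (F : (Fin 4 → ℝ) → (Fin 4 → ℝ) → ℝ) :
    ∑ A : Config d n, F (fun i => lik θ lam d n (e i) A) (fun i => post θ lam d n (e i) A)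
      = ∑ A : Config d n, F (fun i => lik θ lam d n i A) (fun i => post θ lam d n i A) := by
  rw [← sum_comp_perm e (fun A => F (fun i => lik θ lam d n (e i) A)
    (fun i => post θ lam d n (e i) A))]
  refine Finset.sum_congr rfl fun A _ => ?_
  congr 1
  · exact funext fun i => lik_perm e he n i A
  · exact funext fun i => post_perm e he i A

lemma he23 : ∀ i, rootDist θ (Equiv.swap (2 : Fin 4) 3 i) = rootDist θ i := by
  intro i
  fin_cases i <;> rfl

lemma he01 : ∀ i, rootDist θ (Equiv.swap (0 : Fin 4) 1 i) = rootDist θ i := by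
  intro i
  fin_cases i <;> rfl

/-- `E(f_n(3,σ¹(n))-(1-θ)/2)(f_n(4,σ¹(n))-(1-θ)/2)
= ((1-θ)/2)y_{n;1-θ} + (1/2)(u_{n;θ}-(θ/2)x_{n;θ}) + (3/2)(v_{n;θ}-(θ/2)x_{n;θ})
- (w_{n;1-θ} - ((1-θ)/2)x_{n;1-θ})`. -/
theorem cross_moment_34 (θ lam : ℝ) (hθ : θ ∈ Set.Ioo (0 : ℝ) 1) (hlam : |lam| ≤ 1)
    (hP : ∀ i j : Fin 4, 0 ≤ trans θ lam i j) (d : ℕ) (hd : 2 ≤ d) (n : ℕ) :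
    condE θ lam d n 0
        (fun A => (post θ lam d n 2 A - (1 - θ) / 2) * (post θ lam d n 3 A - (1 - θ) / 2))
      = (1 - θ) / 2 * yH θ lam d n
        + 1 / 2 * (uT θ lam d n - θ / 2 * xT θ lam d n)
        + 3 / 2 * (vT θ lam d n - θ / 2 * xT θ lam d n)
        - (wH θ lam d n - (1 - θ) / 2 * xH θ lam d n) := by
  simp only [yH, uT, vT, wH, xT, xH]
  -- swap value computations
  have e23_0 : Equiv.swap (2 : Fin 4) 3 0 = 0 := by decide
  have e23_1 : Equiv.swap (2 : Fin 4) 3 1 = 1 := by decide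
  have e23_2 : Equiv.swap (2 : Fin 4) 3 2 = 3 := by decide
  have e01_0 : Equiv.swap (0 : Fin 4) 1 0 = 1 := by decide
  have e01_1 : Equiv.swap (0 : Fin 4) 1 1 = 0 := by decide
  have e01_2 : Equiv.swap (0 : Fin 4) 1 2 = 2 := by decide
  -- pointwise sum of posteriors
  have hps : ∀ (i : Fin 4) (A : Config d n),
      lik θ lam d n i A * (post θ lam d n 0 A + post θ lam d n 1 A
        + post θ lam d n 2 A + post θ lam d n 3 A) = lik θ lam d n i A := by
    intro i A
    have h := post_sum hθ hP i A
    rwa [Fin.sum_univ_four] at h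
  have h1 : ∑ A : Config d n, lik θ lam d n 0 A = 1 := sum_lik_one n 0
  have h2 : ∑ A : Config d n, lik θ lam d n 2 A = 1 := sum_lik_one n 2
  have h3 : (∑ A : Config d n, lik θ lam d n 0 A * (post θ lam d n 0 A * post θ lam d n 2 A))
      + (∑ A : Config d n, lik θ lam d n 0 A * (post θ lam d n 1 A * post θ lam d n 2 A))
      + (∑ A : Config d n, lik θ lam d n 0 A * (post θ lam d n 2 A * post θ lam d n 2 A))
      + (∑ A : Config d n, lik θ lam d n 0 A * (post θ lam d n 2 A * post θ lam d n 3 A))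
      = ∑ A : Config d n, lik θ lam d n 0 A * post θ lam d n 2 A := by
    rw [← Finset.sum_add_distrib, ← Finset.sum_add_distrib, ← Finset.sum_add_distrib]
    refine Finset.sum_congr rfl fun A _ => ?_
    linear_combination (post θ lam d n 2 A) * hps 0 A
  have h4 : (∑ A : Config d n, lik θ lam d n 0 A * (post θ lam d n 0 A * post θ lam d n 0 A))
      + (∑ A : Config d n, lik θ lam d n 0 A * (post θ lam d n 0 A * post θ lam d n 1 A))
      + (∑ A : Config d n, lik θ lam d n 0 A * (post θ lam d n 0 A * post θ lam d n 2 A))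
      + (∑ A : Config d n, lik θ lam d n 0 A * (post θ lam d n 0 A * post θ lam d n 3 A))
      = ∑ A : Config d n, lik θ lam d n 0 A * post θ lam d n 0 A := by
    rw [← Finset.sum_add_distrib, ← Finset.sum_add_distrib, ← Finset.sum_add_distrib]
    refine Finset.sum_congr rfl fun A _ => ?_
    linear_combination (post θ lam d n 0 A) * hps 0 A
  have h5 : (∑ A : Config d n, lik θ lam d n 0 A * (post θ lam d n 0 A * post θ lam d n 1 A))
      + (∑ A : Config d n, lik θ lam d n 0 A * (post θ lam d n 1 A * post θ lam d n 1 A))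
      + (∑ A : Config d n, lik θ lam d n 0 A * (post θ lam d n 1 A * post θ lam d n 2 A))
      + (∑ A : Config d n, lik θ lam d n 0 A * (post θ lam d n 1 A * post θ lam d n 3 A))
      = ∑ A : Config d n, lik θ lam d n 0 A * post θ lam d n 1 A := by
    rw [← Finset.sum_add_distrib, ← Finset.sum_add_distrib, ← Finset.sum_add_distrib]
    refine Finset.sum_congr rfl fun A _ => ?_
    linear_combination (post θ lam d n 1 A) * hps 0 A
  have h6 : (∑ A : Config d n, lik θ lam d n 0 A * post θ lam d n 0 A)
      + (∑ A : Config d n, lik θ lam d n 0 A * post θ lam d n 1 A)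
      + (∑ A : Config d n, lik θ lam d n 0 A * post θ lam d n 2 A)
      + (∑ A : Config d n, lik θ lam d n 0 A * post θ lam d n 3 A)
      = ∑ A : Config d n, lik θ lam d n 0 A := by
    rw [← Finset.sum_add_distrib, ← Finset.sum_add_distrib, ← Finset.sum_add_distrib]
    refine Finset.sum_congr rfl fun A _ => ?_
    linear_combination hps 0 A
  have h7 : (∑ A : Config d n, lik θ lam d n 2 A * post θ lam d n 0 A)
      + (∑ A : Config d n, lik θ lam d n 2 A * post θ lam d n 1 A)
      + (∑ A : Config d n, lik θ lam d n 2 A * post θ lam d n 2 A)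
      + (∑ A : Config d n, lik θ lam d n 2 A * post θ lam d n 3 A)
      = ∑ A : Config d n, lik θ lam d n 2 A := by
    rw [← Finset.sum_add_distrib, ← Finset.sum_add_distrib, ← Finset.sum_add_distrib]
    refine Finset.sum_congr rfl fun A _ => ?_
    linear_combination hps 2 A
  have h8 : (∑ A : Config d n, lik θ lam d n 0 A * (post θ lam d n 0 A * post θ lam d n 2 A))
      = ∑ A : Config d n, lik θ lam d n 0 A * (post θ lam d n 0 A * post θ lam d n 3 A) := by
    have h := perm_sum (θ := θ) (lam := lam) (d := d) (Equiv.swap (2 : Fin 4) 3) he23 (n := n)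
      (fun Lf pf => Lf 0 * (pf 0 * pf 2))
    simp only [e23_0, e23_2] at h
    exact h.symm
  have h9 : (∑ A : Config d n, lik θ lam d n 0 A * (post θ lam d n 1 A * post θ lam d n 2 A))
      = ∑ A : Config d n, lik θ lam d n 0 A * (post θ lam d n 1 A * post θ lam d n 3 A) := by
    have h := perm_sum (θ := θ) (lam := lam) (d := d) (Equiv.swap (2 : Fin 4) 3) he23 (n := n)
      (fun Lf pf => Lf 0 * (pf 1 * pf 2))
    simp only [e23_0, e23_1, e23_2] at h
    exact h.symm
  have h10 : (∑ A : Config d n, lik θ lam d n 0 A * post θ lam d n 2 A)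
      = ∑ A : Config d n, lik θ lam d n 0 A * post θ lam d n 3 A := by
    have h := perm_sum (θ := θ) (lam := lam) (d := d) (Equiv.swap (2 : Fin 4) 3) he23 (n := n)
      (fun Lf pf => Lf 0 * pf 2)
    simp only [e23_0, e23_2] at h
    exact h.symm
  have hb01 : ∀ A : Config d n,
      lik θ lam d n 0 A * post θ lam d n 1 A = lik θ lam d n 1 A * post θ lam d n 0 A := by
    intro A
    have h := bayes (θ := θ) (lam := lam) (d := d) (n := n) 0 1 A
    rw [rootDist0, rootDist1] at h
    have hne : θ / 2 ≠ 0 := by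
      have := hθ.1; positivity
    exact mul_left_cancel₀ hne h
  have h11 : (∑ A : Config d n, lik θ lam d n 0 A * (post θ lam d n 0 A * post θ lam d n 1 A))
      = ∑ A : Config d n, lik θ lam d n 0 A * (post θ lam d n 1 A * post θ lam d n 1 A) := by
    have step1 : (∑ A : Config d n,
        lik θ lam d n 0 A * (post θ lam d n 0 A * post θ lam d n 1 A))
        = ∑ A : Config d n, lik θ lam d n 1 A * (post θ lam d n 0 A * post θ lam d n 0 A) :=
      Finset.sum_congr rfl fun A _ => by linear_combination (post θ lam d n 0 A) * hb01 A
    have step2 := perm_sum (θ := θ) (lam := lam) (d := d) (Equiv.swap (0 : Fin 4) 1) he01 (n := n)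
      (fun Lf pf => Lf 1 * (pf 0 * pf 0))
    simp only [e01_0, e01_1] at step2
    rw [step1, ← step2]
  have h12 : (1 - θ) / 2 * (∑ A : Config d n, lik θ lam d n 2 A * post θ lam d n 0 A)
      = θ / 2 * (∑ A : Config d n, lik θ lam d n 0 A * post θ lam d n 2 A) := by
    rw [Finset.mul_sum, Finset.mul_sum]
    refine Finset.sum_congr rfl fun A _ => ?_
    have h := bayes (θ := θ) (lam := lam) (d := d) (n := n) 2 0 A
    rw [rootDist2, rootDist0] at h
    exact h
  have h13 : (1 - θ) / 2 * (∑ A : Config d n, lik θ lam d n 2 A * post θ lam d n 1 A)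
      = θ / 2 * (∑ A : Config d n, lik θ lam d n 0 A * post θ lam d n 2 A) := by
    have step1 : (1 - θ) / 2 * (∑ A : Config d n, lik θ lam d n 2 A * post θ lam d n 1 A)
        = θ / 2 * (∑ A : Config d n, lik θ lam d n 1 A * post θ lam d n 2 A) := by
      rw [Finset.mul_sum, Finset.mul_sum]
      refine Finset.sum_congr rfl fun A _ => ?_
      have h := bayes (θ := θ) (lam := lam) (d := d) (n := n) 2 1 A
      rw [rootDist2, rootDist1] at h
      exact h
    have step2 := perm_sum (θ := θ) (lam := lam) (d := d) (Equiv.swap (0 : Fin 4) 1) he01 (n := n)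
      (fun Lf pf => Lf 1 * pf 2)
    simp only [e01_0, e01_1, e01_2] at step2
    rw [step1, step2]
  -- expansions
  have Ec : (∑ A : Config d n, lik θ lam d n 0 A
        * ((post θ lam d n 2 A - (1 - θ) / 2) * (post θ lam d n 3 A - (1 - θ) / 2)))
      = (∑ A : Config d n, lik θ lam d n 0 A * (post θ lam d n 2 A * post θ lam d n 3 A))
        - (1 - θ) / 2 * (∑ A : Config d n, lik θ lam d n 0 A * post θ lam d n 2 A)
        - (1 - θ) / 2 * (∑ A : Config d n, lik θ lam d n 0 A * post θ lam d n 3 A)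
        + ((1 - θ) / 2) ^ 2 * (∑ A : Config d n, lik θ lam d n 0 A) := by
    rw [Finset.mul_sum, Finset.mul_sum, Finset.mul_sum, ← Finset.sum_sub_distrib,
      ← Finset.sum_sub_distrib, ← Finset.sum_add_distrib]
    exact Finset.sum_congr rfl fun A _ => by ring
  have Eu : (∑ A : Config d n, lik θ lam d n 0 A * (post θ lam d n 0 A - θ / 2) ^ 2)
      = (∑ A : Config d n, lik θ lam d n 0 A * (post θ lam d n 0 A * post θ lam d n 0 A))
        - θ * (∑ A : Config d n, lik θ lam d n 0 A * post θ lam d n 0 A)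
        + (θ / 2) ^ 2 * (∑ A : Config d n, lik θ lam d n 0 A) := by
    rw [Finset.mul_sum, Finset.mul_sum, ← Finset.sum_sub_distrib, ← Finset.sum_add_distrib]
    exact Finset.sum_congr rfl fun A _ => by ring
  have Ev : (∑ A : Config d n, lik θ lam d n 0 A * (post θ lam d n 1 A - θ / 2) ^ 2)
      = (∑ A : Config d n, lik θ lam d n 0 A * (post θ lam d n 1 A * post θ lam d n 1 A))
        - θ * (∑ A : Config d n, lik θ lam d n 0 A * post θ lam d n 1 A)
        + (θ / 2) ^ 2 * (∑ A : Config d n, lik θ lam d n 0 A) := by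
    rw [Finset.mul_sum, Finset.mul_sum, ← Finset.sum_sub_distrib, ← Finset.sum_add_distrib]
    exact Finset.sum_congr rfl fun A _ => by ring
  have Ew : (∑ A : Config d n, lik θ lam d n 0 A * (post θ lam d n 2 A - (1 - θ) / 2) ^ 2)
      = (∑ A : Config d n, lik θ lam d n 0 A * (post θ lam d n 2 A * post θ lam d n 2 A))
        - (1 - θ) * (∑ A : Config d n, lik θ lam d n 0 A * post θ lam d n 2 A)
        + ((1 - θ) / 2) ^ 2 * (∑ A : Config d n, lik θ lam d n 0 A) := by
    rw [Finset.mul_sum, Finset.mul_sum, ← Finset.sum_sub_distrib, ← Finset.sum_add_distrib]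
    exact Finset.sum_congr rfl fun A _ => by ring
  simp only [condE]
  linear_combination (θ / 2) * h1 - (1 - θ) / 2 * h2 + h3 - (1 / 2 : ℝ) * h4
    - (1 / 2 : ℝ) * h5 + ((3 * θ - 1) / 2) * h6 - (1 - θ) / 2 * h7 - (1 / 2 : ℝ) * h8
    - (1 / 2 : ℝ) * h9 + θ * h10 + h11 + h12 + h13 + Ec - (1 / 2 : ℝ) * Eu
    - (3 / 2 : ℝ) * Ev + Ew

end Broadcast
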